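/- If ψ₁ = 0 (the first component of ψ vanishes) and w̄ is a local minimizer of g(w) = (1/2)((1/2)‖w‖² − ν)² + (1/2)wᵀDw − ψᵀw, then w̄ is a global minimizer. -/

import Mathlib

/-!
Write `μ = ½‖w‖² − ν`. Along each coordinate line `t ↦ g (w + t eᵢ)` the objective is a quartic
in `t`, so at a local minimizer its linear coefficient vanishes and its quadratic one is
nonnegative: `ψᵢ = (μ + αᵢ) wᵢ` and `μ + αᵢ + wᵢ² ≥ 0`. For the coordinate with `ψᵢ = 0` and the
smallest `αᵢ` these force `μ + αᵢ ≥ 0` (either `wᵢ = 0` or `μ + αᵢ = 0`), hence `D + μ I ⪰ 0`.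
Stationarity then yields the exact identity
`g v − g w = ½ (½‖v‖² − ½‖w‖²)² + ½ (v − w)ᵀ (D + μ I) (v − w) ≥ 0`.
-/

open Finset Filter Topology

theorem IsLocalMin.quartic_coeffs {e a b c d : ℝ}
    (h : IsLocalMin (fun t : ℝ => e + a * t + b * t ^ 2 + c * t ^ 3 + d * t ^ 4) 0) :
    a = 0 ∧ 0 ≤ b := by
  have ha : a = 0 := by
    refine h.hasDerivAt_eq_zero ?_
    simpa using (((((hasDerivAt_id' (0:ℝ)).const_mul a).const_add e).fun_add
      ((hasDerivAt_pow 2 (0:ℝ)).const_mul b)).fun_add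
      ((hasDerivAt_pow 3 (0:ℝ)).const_mul c)).fun_add ((hasDerivAt_pow 4 (0:ℝ)).const_mul d)
  subst ha
  refine ⟨rfl, ?_⟩
  have hlim : Tendsto (fun t : ℝ => b + c * t + d * t ^ 2) (𝓝[≠] 0) (𝓝 b) := by
    simpa using ((by fun_prop : Continuous fun t : ℝ => b + c * t + d * t ^ 2).tendsto 0).mono_left
      nhdsWithin_le_nhds
  refine ge_of_tendsto hlim ?_
  filter_upwards [nhdsWithin_le_nhds h, self_mem_nhdsWithin] with t ht (hne : t ≠ 0)
  refine nonneg_of_mul_nonneg_right (a := t ^ 2) ?_ (by positivity)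
  simp only [zero_mul, add_zero, ne_eq, OfNat.ofNat_ne_zero, not_false_eq_true, zero_pow] at ht
  linarith

noncomputable section

variable {ι : Type*} [Fintype ι]

theorem Finset.sum_apply_update [DecidableEq ι] {M : Type*} [AddCommGroup M] {β : Type*}
    (h : ι → β → M) (f : ι → β) (i : ι) (x : β) :
    ∑ j, h j (Function.update f i x j) = ∑ j, h j (f j) - h i (f i) + h i x := by
  simp_rw [Function.apply_update h, sum_update_of_mem (mem_univ i), sdiff_singleton_eq_erase,
    ← add_sum_erase univ (fun j => h j (f j)) (mem_univ i)]
  abel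

def quarticObjective (α ψ : ι → ℝ) (ν : ℝ) (w : ι → ℝ) : ℝ :=
  (1/2) * ((1/2) * ∑ i, (w i)^2 - ν)^2 + (1/2) * ∑ i, α i * (w i)^2 - ∑ i, ψ i * w i

/-- Stationary points of `quarticObjective α ψ ν` solve `(D + μ I) w = ψ` with this `μ`. -/
def quarticMultiplier (ν : ℝ) (w : ι → ℝ) : ℝ := (1/2) * ∑ i, (w i)^2 - ν

variable {α ψ : ι → ℝ} {ν : ℝ} {w : ι → ℝ}

theorem quarticObjective_update_add [DecidableEq ι] (i : ι) (t : ℝ) :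
    quarticObjective α ψ ν (Function.update w i (w i + t)) =
      quarticObjective α ψ ν w + ((quarticMultiplier ν w + α i) * w i - ψ i) * t
        + (quarticMultiplier ν w + α i + w i ^ 2) / 2 * t ^ 2 + w i / 2 * t ^ 3
        + 1 / 8 * t ^ 4 := by
  simp only [quarticObjective, quarticMultiplier, sum_apply_update (fun _ y => y ^ 2),
    sum_apply_update (fun j y => α j * y ^ 2), sum_apply_update (fun j y => ψ j * y)]
  ring

theorem IsLocalMin.quarticObjective_optimality (hw : IsLocalMin (quarticObjective α ψ ν) w)
    (i : ι) :
    ψ i = (quarticMultiplier ν w + α i) * w i ∧ 0 ≤ quarticMultiplier ν w + α i + w i ^ 2 := by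
  classical
  have hline : IsLocalMin (quarticObjective α ψ ν ∘ fun t => Function.update w i (w i + t)) 0 :=
    IsLocalMin.comp_continuous (by simpa using hw) (by fun_prop)
  simp only [Function.comp_def, quarticObjective_update_add] at hline
  obtain ⟨h1, h2⟩ := hline.quartic_coeffs
  constructor <;> linarith

theorem quarticObjective_eq_of_stationary (hψ : ∀ i, ψ i = (quarticMultiplier ν w + α i) * w i)
    (v : ι → ℝ) :
    quarticObjective α ψ ν v = quarticObjective α ψ ν w
      + (1/2) * ((1/2) * ∑ j, (v j)^2 - (1/2) * ∑ j, (w j)^2)^2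
      + (1/2) * ∑ j, (quarticMultiplier ν w + α j) * (v j - w j)^2 := by
  set μ := quarticMultiplier ν w with hμ
  have hexpand : ∑ j, (μ + α j) * (v j - w j)^2 = μ * ∑ j, (v j)^2 - μ * ∑ j, (w j)^2
      + ∑ j, α j * (v j)^2 - ∑ j, α j * (w j)^2 - 2 * ∑ j, ψ j * v j + 2 * ∑ j, ψ j * w j := by
    simp only [mul_sum, ← sum_sub_distrib, ← sum_add_distrib]
    exact sum_congr rfl fun j _ => by rw [hψ j]; ring
  rw [hexpand, quarticObjective, quarticObjective, hμ, quarticMultiplier]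
  ring

theorem quarticObjective_le_of_stationary (hψ : ∀ i, ψ i = (quarticMultiplier ν w + α i) * w i)
    (hpos : ∀ i, 0 ≤ quarticMultiplier ν w + α i) (v : ι → ℝ) :
    quarticObjective α ψ ν w ≤ quarticObjective α ψ ν v := by
  rw [quarticObjective_eq_of_stationary hψ v]
  have hsq : 0 ≤ ((1/2) * ∑ j, (v j)^2 - (1/2) * ∑ j, (w j)^2)^2 := sq_nonneg _
  have hsum := sum_nonneg fun j (_ : j ∈ univ) => mul_nonneg (hpos j) (sq_nonneg (v j - w j))
  linarith

theorem IsLocalMin.quarticMultiplier_add_nonneg (hw : IsLocalMin (quarticObjective α ψ ν) w)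
    {i : ι} (hi : ψ i = 0) : 0 ≤ quarticMultiplier ν w + α i := by
  obtain ⟨h1, h2⟩ := hw.quarticObjective_optimality i
  rcases mul_eq_zero.mp (hi ▸ h1).symm with h | h
  · exact h.ge
  · simpa [h] using h2

theorem IsLocalMin.quarticObjective_le (hw : IsLocalMin (quarticObjective α ψ ν) w)
    {i₀ : ι} (hψ : ψ i₀ = 0) (hα : ∀ j, α i₀ ≤ α j) (v : ι → ℝ) :
    quarticObjective α ψ ν w ≤ quarticObjective α ψ ν v :=
  quarticObjective_le_of_stationary (fun i => (hw.quarticObjective_optimality i).1)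
    (fun j => (hw.quarticMultiplier_add_nonneg hψ).trans (by gcongr; exact hα j)) v

end

theorem stmt7 {n : ℕ} (hn : 1 ≤ n) (α ψ : Fin n → ℝ) (hα : Monotone α) (ν : ℝ)
    (hψ : ψ ⟨0, hn⟩ = 0)
    (g : (Fin n → ℝ) → ℝ)
    (hg : ∀ w, g w = (1/2) * ((1/2) * ∑ i, (w i)^2 - ν)^2
        + (1/2) * ∑ i, α i * (w i)^2 - ∑ i, ψ i * w i)
    (w : Fin n → ℝ) (hmin : IsLocalMin g w) :
    ∀ v : Fin n → ℝ, g w ≤ g v := by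
  obtain rfl : g = quarticObjective α ψ ν := funext hg
  exact hmin.quarticObjective_le hψ fun j => hα (Nat.zero_le j.val)
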